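/- arXiv:2306.09717 — 5 statements merged into one kernel-verified Lean document; each statement's English description precedes it below -/
import Mathlib

section
/- Let $F$ be a field and let $(C^a_k)_{k \in \mathbb{Z}}$, $(C^b_k)_{k \in \mathbb{Z}}$ be families of $F$-vector spaces vanishing in negative degrees, equipped with linear maps $\partial^{aa}_k : C^a_k \to C^a_{k-1}$, $\partial^{bb}_k : C^b_k \to C^b_{k-1}$, $\partial^{ab}_k : C^a_k \to C^b_{k-1}$ satisfying, for all $k$: $\partial^{aa}_k \circ \partial^{aa}_{k+1} = 0$, $\partial^{bb}_k \circ \partial^{bb}_{k+1} = 0$, and $\partial^{ab}_k \circ \partial^{aa}_{k+1} + \partial^{bb}_k \circ \partial^{ab}_{k+1} = 0$. Suppose $G^{aa}_* = \{G^{aa}_k : C^a_{k-1} \to C^a_k\}$ and $G^{bb}_* = \{G^{bb}_k : C^b_{k-1} \to C^b_k\}$ are combinatorial propagators for $(C^a_*, \partial^{aa}_*)$ and $(C^b_*, \partial^{bb}_*)$ respectively. Then there exists a family of linear maps $G^{ab}_* = \{G^{ab}_k : C^a_{k-1} \to C^b_k\}$ such that for every $k$: $\partial^{ab}_{k+1}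 \circ G^{aa}_{k+1} + \partial^{bb}_{k+1} \circ G^{ab}_{k+1} + G^{ab}_k \circ \partial^{aa}_k + G^{bb}_k \circ \partial^{ab}_k = 0$. -/
/-! Take `G^{ab} = -G^{bb} ∘ ∂^{ab} ∘ G^{aa}`. Expanding `∂^{bb} G^{ab}` and `G^{ab} ∂^{aa}` with
the propagator identities of the two diagonal blocks, everything cancels except
`G^{bb} (∂^{ab} ∂^{aa} + ∂^{bb} ∂^{ab}) G^{aa}`, which vanishes because the total differential
squares to zero. -/

section MixedPropagator

variable {R : Type*} [Ring R] {A B : ℤ → Type*}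
  [∀ k, AddCommGroup (A k)] [∀ k, Module R (A k)]
  [∀ k, AddCommGroup (B k)] [∀ k, Module R (B k)]
  {daa : ∀ k : ℤ, A (k + 1) →ₗ[R] A k} {dbb : ∀ k : ℤ, B (k + 1) →ₗ[R] B k}
  (dab : ∀ k : ℤ, A (k + 1) →ₗ[R] B k)
  (gaa : ∀ k : ℤ, A k →ₗ[R] A (k + 1)) (gbb : ∀ k : ℤ, B k →ₗ[R] B (k + 1))

def mixedPropagator (k : ℤ) : A k →ₗ[R] B (k + 1) :=
  -((gbb k).comp ((dab k).comp (gaa k)))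

open LinearMap

theorem comp_mixedPropagator_succ
    (hgbb : ∀ k, (dbb (k + 1)).comp (gbb (k + 1)) + (gbb k).comp (dbb k) = LinearMap.id) (k : ℤ) :
    (dbb (k + 1)).comp (mixedPropagator dab gaa gbb (k + 1)) =
      (gbb k).comp ((dbb k).comp ((dab (k + 1)).comp (gaa (k + 1))))
        - (dab (k + 1)).comp (gaa (k + 1)) := by
  have h := congrArg (·.comp ((dab (k + 1)).comp (gaa (k + 1)))) (hgbb k)
  simp only [add_comp, id_comp, comp_assoc] at h
  rw [mixedPropagator, comp_neg, eq_sub_of_add_eq h, neg_sub]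

theorem mixedPropagator_comp
    (hgaa : ∀ k, (daa (k + 1)).comp (gaa (k + 1)) + (gaa k).comp (daa k) = LinearMap.id) (k : ℤ) :
    (mixedPropagator dab gaa gbb k).comp (daa k) =
      (gbb k).comp ((dab k).comp ((daa (k + 1)).comp (gaa (k + 1))))
        - (gbb k).comp (dab k) := by
  have h := congrArg (fun f => (gbb k).comp ((dab k).comp f)) (hgaa k)
  simp only [comp_add, comp_id] at h
  rw [mixedPropagator, neg_comp, comp_assoc, comp_assoc, eq_sub_of_add_eq' h, neg_sub]

theorem mixedPropagator_spec
    (hdab : ∀ k, (dab k).comp (daa (k + 1)) + (dbb k).comp (dab (k + 1)) = 0)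
    (hgaa : ∀ k, (daa (k + 1)).comp (gaa (k + 1)) + (gaa k).comp (daa k) = LinearMap.id)
    (hgbb : ∀ k, (dbb (k + 1)).comp (gbb (k + 1)) + (gbb k).comp (dbb k) = LinearMap.id) (k : ℤ) :
    (dab (k + 1)).comp (gaa (k + 1)) + (dbb (k + 1)).comp (mixedPropagator dab gaa gbb (k + 1))
      + (mixedPropagator dab gaa gbb k).comp (daa k) + (gbb k).comp (dab k) = 0 := by
  have h := congrArg (fun f => (gbb k).comp (f.comp (gaa (k + 1)))) (hdab k)
  simp only [add_comp, comp_add, zero_comp, comp_zero, comp_assoc] at h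
  rw [comp_mixedPropagator_succ dab gaa gbb hgbb, mixedPropagator_comp dab gaa gbb hgaa]
  convert h using 1
  abel

end MixedPropagator

theorem stmt_0_general (F : Type*) [Field F]
    (Ca Cb : ℤ → Type*)
    [∀ k, AddCommGroup (Ca k)] [∀ k, Module F (Ca k)]
    [∀ k, AddCommGroup (Cb k)] [∀ k, Module F (Cb k)]
    (daa : ∀ k : ℤ, Ca (k + 1) →ₗ[F] Ca k)
    (dbb : ∀ k : ℤ, Cb (k + 1) →ₗ[F] Cb k)
    (dab : ∀ k : ℤ, Ca (k + 1) →ₗ[F] Cb k)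
    (hdab : ∀ k : ℤ, (dab k).comp (daa (k + 1)) + (dbb k).comp (dab (k + 1)) = 0)
    (gaa : ∀ k : ℤ, Ca k →ₗ[F] Ca (k + 1))
    (gbb : ∀ k : ℤ, Cb k →ₗ[F] Cb (k + 1))
    (hgaa : ∀ k : ℤ,
      (daa (k + 1)).comp (gaa (k + 1)) + (gaa k).comp (daa k) = LinearMap.id)
    (hgbb : ∀ k : ℤ,
      (dbb (k + 1)).comp (gbb (k + 1)) + (gbb k).comp (dbb k) = LinearMap.id) :
    ∃ gab : ∀ k : ℤ, Ca k →ₗ[F] Cb (k + 1),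
      ∀ k : ℤ,
        (dab (k + 1)).comp (gaa (k + 1)) + (dbb (k + 1)).comp (gab (k + 1))
          + (gab k).comp (daa k) + (gbb k).comp (dab k) = 0 := by
  exact ⟨mixedPropagator dab gaa gbb, mixedPropagator_spec dab gaa gbb hdab hgaa hgbb⟩

theorem stmt_0 (F : Type*) [Field F]
    (Ca Cb : ℤ → Type*)
    [∀ k, AddCommGroup (Ca k)] [∀ k, Module F (Ca k)]
    [∀ k, AddCommGroup (Cb k)] [∀ k, Module F (Cb k)]
    (hCa : ∀ k : ℤ, k < 0 → Subsingleton (Ca k))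
    (hCb : ∀ k : ℤ, k < 0 → Subsingleton (Cb k))
    (daa : ∀ k : ℤ, Ca (k + 1) →ₗ[F] Ca k)
    (dbb : ∀ k : ℤ, Cb (k + 1) →ₗ[F] Cb k)
    (dab : ∀ k : ℤ, Ca (k + 1) →ₗ[F] Cb k)
    (hdaa : ∀ k : ℤ, (daa k).comp (daa (k + 1)) = 0)
    (hdbb : ∀ k : ℤ, (dbb k).comp (dbb (k + 1)) = 0)
    (hdab : ∀ k : ℤ, (dab k).comp (daa (k + 1)) + (dbb k).comp (dab (k + 1)) = 0)
    (gaa : ∀ k : ℤ, Ca k →ₗ[F] Ca (k + 1))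
    (gbb : ∀ k : ℤ, Cb k →ₗ[F] Cb (k + 1))
    (hgaa : ∀ k : ℤ,
      (daa (k + 1)).comp (gaa (k + 1)) + (gaa k).comp (daa k) = LinearMap.id)
    (hgbb : ∀ k : ℤ,
      (dbb (k + 1)).comp (gbb (k + 1)) + (gbb k).comp (dbb k) = LinearMap.id) :
    ∃ gab : ∀ k : ℤ, Ca k →ₗ[F] Cb (k + 1),
      ∀ k : ℤ,
        (dab (k + 1)).comp (gaa (k + 1)) + (dbb (k + 1)).comp (gab (k + 1))
          + (gab k).comp (daa k) + (gbb k).comp (dab k) = 0 :=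
  stmt_0_general F Ca Cb daa dbb dab hdab gaa gbb hgaa hgbb
end

section
/- Let $F$ be a field and let $(C^a_k)_{k \in \mathbb{Z}}$, $(C^b_k)_{k \in \mathbb{Z}}$ be families of $F$-vector spaces vanishing in negative degrees, equipped with linear maps $\partial^{aa}_k : C^a_k \to C^a_{k-1}$, $\partial^{bb}_k : C^b_k \to C^b_{k-1}$, $\partial^{ab}_k : C^a_k \to C^b_{k-1}$ satisfying, for all $k$: $\partial^{aa}_k \circ \partial^{aa}_{k+1} = 0$, $\partial^{bb}_k \circ \partial^{bb}_{k+1} = 0$, and $\partial^{ab}_k \circ \partial^{aa}_{k+1} + \partial^{bb}_k \circ \partial^{ab}_{k+1} = 0$. Let $G^{aa}_*$ and $G^{bb}_*$ be combinatorial propagators for $(C^a_*, \partial^{aa}_*)$ and $(C^b_*, \partial^{bb}_*)$. Define $G^{ab}_k : C^a_{k-1} \to C^b_k$ recursively by $G^{ab}_k = 0$ for $k \le 0$ and $G^{ab}_{k+1} = -\big( G^{bb}_{k+1} \circ \partial^{ab}_{k+1} \circ G^{aa}_{k+1} + G^{bb}_{k+1} \circ G^{ab}_k \circ \partial^{aa}_k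 + G^{bb}_{k+1} \circ G^{bb}_k \circ \partial^{ab}_k \big)$ for $k \ge 0$. Then for every $k$: $\partial^{ab}_{k+1} \circ G^{aa}_{k+1} + \partial^{bb}_{k+1} \circ G^{ab}_{k+1} + G^{ab}_k \circ \partial^{aa}_k + G^{bb}_k \circ \partial^{ab}_k = 0$; consequently $G_k(x,y) = (G^{aa}_k x, G^{ab}_k x + G^{bb}_k y)$ is a combinatorial propagator for the total complex $C_k = C^a_k \oplus C^b_k$ with $\partial_k(x,y) = (\partial^{aa}_k x, \partial^{ab}_k x + \partial^{bb}_k y)$. -/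
/-!
The mixed identity is proved by induction on the degree; it holds trivially in negative degrees,
where `Cb` vanishes. Write `S k = mixedResidual k` for the mixed defect without its
`dbb ∘ gab` term, so that the recursion reads `gab (k + 1) = -gbb (k + 1) ∘ S k`. The propagator
identity for `gbb` then turns the mixed defect into `gbb k ∘ dbb k ∘ S k`, and `dbb k ∘ S k = 0`
follows from the mixed identity one degree lower composed with `daa`, together with `∂² = 0`,
the compatibility of `dab` with the differentials and both propagator identities. Given the mixed
identity, the block map `G` is a propagator for the total complex: its diagonal blocks are the
propagator identities for `gaa` and `gbb`, its off-diagonal block is the mixed identity.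
-/

def IsPropagator {R : Type*} [Semiring R] {C : ℤ → Type*}
    [∀ k, AddCommMonoid (C k)] [∀ k, Module R (C k)]
    (d : ∀ k : ℤ, C (k + 1) →ₗ[R] C k) (g : ∀ k : ℤ, C k →ₗ[R] C (k + 1)) : Prop :=
  ∀ k, (d (k + 1)).comp (g (k + 1)) + (g k).comp (d k) = LinearMap.id

namespace MixedPropagator

variable {R : Type*} [Semiring R] {Ca Cb : ℤ → Type*}
  [∀ k, AddCommGroup (Ca k)] [∀ k, Module R (Ca k)]
  [∀ k, AddCommGroup (Cb k)] [∀ k, Module R (Cb k)]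
  (daa : ∀ k : ℤ, Ca (k + 1) →ₗ[R] Ca k) (dbb : ∀ k : ℤ, Cb (k + 1) →ₗ[R] Cb k)
  (dab : ∀ k : ℤ, Ca (k + 1) →ₗ[R] Cb k)
  (gaa : ∀ k : ℤ, Ca k →ₗ[R] Ca (k + 1)) (gbb : ∀ k : ℤ, Cb k →ₗ[R] Cb (k + 1))
  (gab : ∀ k : ℤ, Ca k →ₗ[R] Cb (k + 1))

def mixedDefect (k : ℤ) : Ca (k + 1) →ₗ[R] Cb (k + 1) :=
  (dab (k + 1)).comp (gaa (k + 1)) + (dbb (k + 1)).comp (gab (k + 1))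
    + (gab k).comp (daa k) + (gbb k).comp (dab k)

def mixedResidual (k : ℤ) : Ca (k + 1) →ₗ[R] Cb (k + 1) :=
  (dab (k + 1)).comp (gaa (k + 1)) + (gab k).comp (daa k) + (gbb k).comp (dab k)

theorem mixedDefect_eq_of_recursion (hgbb : IsPropagator dbb gbb) {k : ℤ}
    (hrec : gab (k + 1) = -(gbb (k + 1)).comp (mixedResidual daa dab gaa gbb gab k)) :
    mixedDefect daa dbb dab gaa gbb gab k
      = (gbb k).comp ((dbb k).comp (mixedResidual daa dab gaa gbb gab k)) := by
  have hgbbS := congrArg (·.comp (mixedResidual daa dab gaa gbb gab k)) (hgbb k)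
  simp only [LinearMap.add_comp, LinearMap.comp_assoc, LinearMap.id_comp] at hgbbS
  rw [mixedDefect, hrec, LinearMap.comp_neg]
  unfold mixedResidual at hgbbS ⊢
  linear_combination (norm := abel) -hgbbS

theorem dbb_comp_mixedResidual_eq_zero
    (hdaa : ∀ k, (daa k).comp (daa (k + 1)) = 0)
    (hdab : ∀ k, (dab k).comp (daa (k + 1)) + (dbb k).comp (dab (k + 1)) = 0)
    (hgaa : IsPropagator daa gaa) (hgbb : IsPropagator dbb gbb)
    {k : ℤ} (hk : mixedDefect daa dbb dab gaa gbb gab k = 0) :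
    (dbb (k + 1)).comp (mixedResidual daa dab gaa gbb gab (k + 1)) = 0 := by
  ext x
  have hdab₁ := LinearMap.congr_fun (hdab (k + 1)) (gaa (k + 1 + 1) x)
  have hM₀ := LinearMap.congr_fun hk (daa (k + 1) x)
  have hdaa₀ := congrArg (gab k) (LinearMap.congr_fun (hdaa k) x)
  have hdab₀ := congrArg (gbb k) (LinearMap.congr_fun (hdab k) x)
  have hgbb₀ := LinearMap.congr_fun (hgbb k) (dab (k + 1) x)
  have hgaa₁ := congrArg (dab (k + 1)) (LinearMap.congr_fun (hgaa (k + 1)) x)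
  simp only [mixedDefect, mixedResidual, LinearMap.add_apply, LinearMap.comp_apply,
    LinearMap.zero_apply, LinearMap.id_apply, map_add, map_zero]
    at hdab₁ hM₀ hdaa₀ hdab₀ hgbb₀ hgaa₁ ⊢
  linear_combination (norm := abel) hdab₁ + hM₀ - hdaa₀ - hdab₀ + hgbb₀ - hgaa₁

theorem mixedDefect_succ_eq_zero
    (hdaa : ∀ k, (daa k).comp (daa (k + 1)) = 0)
    (hdab : ∀ k, (dab k).comp (daa (k + 1)) + (dbb k).comp (dab (k + 1)) = 0)
    (hgaa : IsPropagator daa gaa) (hgbb : IsPropagator dbb gbb) {k : ℤ}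
    (hrec : gab (k + 1 + 1) = -(gbb (k + 1 + 1)).comp (mixedResidual daa dab gaa gbb gab (k + 1)))
    (hk : mixedDefect daa dbb dab gaa gbb gab k = 0) :
    mixedDefect daa dbb dab gaa gbb gab (k + 1) = 0 := by
  rw [mixedDefect_eq_of_recursion daa dbb dab gaa gbb gab hgbb hrec,
    dbb_comp_mixedResidual_eq_zero daa dbb dab gaa gbb gab hdaa hdab hgaa hgbb hk,
    LinearMap.comp_zero]

theorem mixedDefect_eq_zero (hCb : ∀ k : ℤ, k < 0 → Subsingleton (Cb k))
    (hdaa : ∀ k, (daa k).comp (daa (k + 1)) = 0)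
    (hdab : ∀ k, (dab k).comp (daa (k + 1)) + (dbb k).comp (dab (k + 1)) = 0)
    (hgaa : IsPropagator daa gaa) (hgbb : IsPropagator dbb gbb)
    (hrec : ∀ k : ℤ, -1 ≤ k →
      gab (k + 1) = -(gbb (k + 1)).comp (mixedResidual daa dab gaa gbb gab k))
    (k : ℤ) : mixedDefect daa dbb dab gaa gbb gab k = 0 := by
  have of_lt : ∀ k : ℤ, k < -1 → mixedDefect daa dbb dab gaa gbb gab k = 0 := fun k hk =>
    have := hCb (k + 1) (by omega)
    Subsingleton.elim _ _
  obtain hk | hk := lt_or_ge k (-2)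
  · exact of_lt k (by omega)
  induction k, hk using Int.leInduction with
  | base => exact of_lt (-2) (by norm_num)
  | succ m hm ih =>
    exact mixedDefect_succ_eq_zero daa dbb dab gaa gbb gab hdaa hdab hgaa hgbb
      (hrec (m + 1) (by omega)) ih

theorem isPropagator_prod (hgaa : IsPropagator daa gaa) (hgbb : IsPropagator dbb gbb)
    (hM : ∀ k, mixedDefect daa dbb dab gaa gbb gab k = 0)
    (D : ∀ k : ℤ, Ca (k + 1) × Cb (k + 1) →ₗ[R] Ca k × Cb k)
    (hD : ∀ k x, D k x = (daa k x.1, dab k x.1 + dbb k x.2))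
    (G : ∀ k : ℤ, Ca k × Cb k →ₗ[R] Ca (k + 1) × Cb (k + 1))
    (hG : ∀ k x, G k x = (gaa k x.1, gab k x.1 + gbb k x.2)) :
    IsPropagator D G := by
  refine fun k => LinearMap.ext fun ⟨x, y⟩ => ?_
  have ha := LinearMap.congr_fun (hgaa k) x
  have hb := LinearMap.congr_fun (hgbb k) y
  have hab := LinearMap.congr_fun (hM k) x
  simp only [mixedDefect, LinearMap.add_apply, LinearMap.comp_apply, LinearMap.id_apply,
    LinearMap.zero_apply] at ha hb hab
  simp only [LinearMap.add_apply, LinearMap.comp_apply, LinearMap.id_apply, hD, hG, map_add,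
    Prod.mk_add_mk, Prod.mk.injEq]
  refine ⟨ha, ?_⟩
  linear_combination (norm := abel) hab + hb

end MixedPropagator

open MixedPropagator in
theorem stmt_3_general (F : Type*) [Field F]
    (Ca Cb : ℤ → Type*)
    [∀ k, AddCommGroup (Ca k)] [∀ k, Module F (Ca k)]
    [∀ k, AddCommGroup (Cb k)] [∀ k, Module F (Cb k)]
    (hCb : ∀ k : ℤ, k < 0 → Subsingleton (Cb k))
    (daa : ∀ k : ℤ, Ca (k + 1) →ₗ[F] Ca k)
    (dbb : ∀ k : ℤ, Cb (k + 1) →ₗ[F] Cb k)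
    (dab : ∀ k : ℤ, Ca (k + 1) →ₗ[F] Cb k)
    (hdaa : ∀ k : ℤ, (daa k).comp (daa (k + 1)) = 0)
    (hdab : ∀ k : ℤ, (dab k).comp (daa (k + 1)) + (dbb k).comp (dab (k + 1)) = 0)
    (gaa : ∀ k : ℤ, Ca k →ₗ[F] Ca (k + 1))
    (gbb : ∀ k : ℤ, Cb k →ₗ[F] Cb (k + 1))
    (hgaa : ∀ k : ℤ,
      (daa (k + 1)).comp (gaa (k + 1)) + (gaa k).comp (daa k) = LinearMap.id)
    (hgbb : ∀ k : ℤ,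
      (dbb (k + 1)).comp (gbb (k + 1)) + (gbb k).comp (dbb k) = LinearMap.id)
    (gab : ∀ k : ℤ, Ca k →ₗ[F] Cb (k + 1))
    (hgabrec : ∀ k : ℤ, -1 ≤ k →
      gab (k + 1) =
        -((gbb (k + 1)).comp ((dab (k + 1)).comp (gaa (k + 1)))
          + (gbb (k + 1)).comp ((gab k).comp (daa k))
          + (gbb (k + 1)).comp ((gbb k).comp (dab k))))
    (D : ∀ k : ℤ, Ca (k + 1) × Cb (k + 1) →ₗ[F] Ca k × Cb k)
    (hD : ∀ (k : ℤ) (x : Ca (k + 1) × Cb (k + 1)),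
      D k x = (daa k x.1, dab k x.1 + dbb k x.2))
    (G : ∀ k : ℤ, Ca k × Cb k →ₗ[F] Ca (k + 1) × Cb (k + 1))
    (hG : ∀ (k : ℤ) (x : Ca k × Cb k),
      G k x = (gaa k x.1, gab k x.1 + gbb k x.2)) :
    (∀ k : ℤ,
      (dab (k + 1)).comp (gaa (k + 1)) + (dbb (k + 1)).comp (gab (k + 1))
        + (gab k).comp (daa k) + (gbb k).comp (dab k) = 0)
    ∧ (∀ k : ℤ, (D (k + 1)).comp (G (k + 1)) + (G k).comp (D k) = LinearMap.id) := by
  have hrec : ∀ k : ℤ, -1 ≤ k →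
      gab (k + 1) = -(gbb (k + 1)).comp (mixedResidual daa dab gaa gbb gab k) := fun k hk => by
    rw [hgabrec k hk, mixedResidual, LinearMap.comp_add, LinearMap.comp_add]
  have hM := mixedDefect_eq_zero daa dbb dab gaa gbb gab hCb hdaa hdab hgaa hgbb hrec
  exact ⟨hM, isPropagator_prod daa dbb dab gaa gbb gab hgaa hgbb hM D hD G hG⟩

theorem stmt_3 (F : Type*) [Field F]
    (Ca Cb : ℤ → Type*)
    [∀ k, AddCommGroup (Ca k)] [∀ k, Module F (Ca k)]
    [∀ k, AddCommGroup (Cb k)] [∀ k, Module F (Cb k)]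
    (hCa : ∀ k : ℤ, k < 0 → Subsingleton (Ca k))
    (hCb : ∀ k : ℤ, k < 0 → Subsingleton (Cb k))
    (daa : ∀ k : ℤ, Ca (k + 1) →ₗ[F] Ca k)
    (dbb : ∀ k : ℤ, Cb (k + 1) →ₗ[F] Cb k)
    (dab : ∀ k : ℤ, Ca (k + 1) →ₗ[F] Cb k)
    (hdaa : ∀ k : ℤ, (daa k).comp (daa (k + 1)) = 0)
    (hdbb : ∀ k : ℤ, (dbb k).comp (dbb (k + 1)) = 0)
    (hdab : ∀ k : ℤ, (dab k).comp (daa (k + 1)) + (dbb k).comp (dab (k + 1)) = 0)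
    (gaa : ∀ k : ℤ, Ca k →ₗ[F] Ca (k + 1))
    (gbb : ∀ k : ℤ, Cb k →ₗ[F] Cb (k + 1))
    (hgaa : ∀ k : ℤ,
      (daa (k + 1)).comp (gaa (k + 1)) + (gaa k).comp (daa k) = LinearMap.id)
    (hgbb : ∀ k : ℤ,
      (dbb (k + 1)).comp (gbb (k + 1)) + (gbb k).comp (dbb k) = LinearMap.id)
    (gab : ∀ k : ℤ, Ca k →ₗ[F] Cb (k + 1))
    (hgab0 : ∀ k : ℤ, k + 1 ≤ 0 → gab k = 0)
    (hgabrec : ∀ k : ℤ, -1 ≤ k →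
      gab (k + 1) =
        -((gbb (k + 1)).comp ((dab (k + 1)).comp (gaa (k + 1)))
          + (gbb (k + 1)).comp ((gab k).comp (daa k))
          + (gbb (k + 1)).comp ((gbb k).comp (dab k))))
    (D : ∀ k : ℤ, Ca (k + 1) × Cb (k + 1) →ₗ[F] Ca k × Cb k)
    (hD : ∀ (k : ℤ) (x : Ca (k + 1) × Cb (k + 1)),
      D k x = (daa k x.1, dab k x.1 + dbb k x.2))
    (G : ∀ k : ℤ, Ca k × Cb k →ₗ[F] Ca (k + 1) × Cb (k + 1))
    (hG : ∀ (k : ℤ) (x : Ca k × Cb k),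
      G k x = (gaa k x.1, gab k x.1 + gbb k x.2)) :
    (∀ k : ℤ,
      (dab (k + 1)).comp (gaa (k + 1)) + (dbb (k + 1)).comp (gab (k + 1))
        + (gab k).comp (daa k) + (gbb k).comp (dab k) = 0)
    ∧ (∀ k : ℤ, (D (k + 1)).comp (G (k + 1)) + (G k).comp (D k) = LinearMap.id) :=
  stmt_3_general F Ca Cb hCb daa dbb dab hdaa hdab gaa gbb hgaa hgbb gab hgabrec D hD G hG
end

section
/- Let $F$ be a field, fix an integer $k \ge 1$, and let $C^a_{k-2}, C^a_{k-1}, C^a_k, C^a_{k+1}, C^b_{k-2}, C^b_{k-1}, C^b_k, C^b_{k+1}$ be $F$-vector spaces with linear maps $\partial^{aa}_j : C^a_j \to C^a_{j-1}$, $\partial^{bb}_j : C^b_j \to C^b_{j-1}$, $\partial^{ab}_j : C^a_j \to C^b_{j-1}$ (for the relevant indices $j$), $G^{aa}_j : C^a_{j-1} \to C^a_j$, $G^{bb}_j : C^b_{j-1} \to C^b_j$, $G^{ab}_j : C^a_{j-1} \to C^b_j$, and an arbitrary linear map $\widetilde{G}^{ab}_{k+1} : C^a_k \to C^b_{k+1}$.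 Assume: (i) $\partial^{aa}_{k-1} \circ \partial^{aa}_k = 0$, $\partial^{bb}_k \circ \partial^{bb}_{k+1} = 0$; (ii) $\partial^{ab}_k \circ \partial^{aa}_{k+1} + \partial^{bb}_k \circ \partial^{ab}_{k+1} = 0$ and $\partial^{ab}_{k-1} \circ \partial^{aa}_k + \partial^{bb}_{k-1} \circ \partial^{ab}_k = 0$; (iii) $\partial^{aa}_{k+1} \circ G^{aa}_{k+1} + G^{aa}_k \circ \partial^{aa}_k = \mathrm{id}_{C^a_k}$ and $\partial^{bb}_k \circ G^{bb}_k + G^{bb}_{k-1} \circ \partial^{bb}_{k-1} = \mathrm{id}_{C^b_{k-1}}$; (iv) the degree-$(k-1)$ mixed identity $\partial^{ab}_k \circ G^{aa}_k + \partial^{bb}_k \circ G^{ab}_k + G^{ab}_{k-1} \circ \partial^{aa}_{k-1} + G^{bb}_{k-1} \circ \partial^{ab}_{k-1} = 0$. Then $G^{bb}_k \circ \partial^{bb}_k \circ \big( \partial^{ab}_{k+1} \circ G^{aa}_{k+1} + \partial^{bb}_{k+1} \circ \widetilde{G}^{ab}_{k+1} + G^{ab}_k \circ \partial^{aa}_k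 + G^{bb}_k \circ \partial^{ab}_k \big) = 0$. -/
open LinearMap

section MixedPropagator

variable {R : Type*} [Semiring R]
  {Cam2 Cam1 Cak Cap1 Cbm2 Cbm1 Cbk Cbp1 : Type*}
  [AddCommGroup Cam2] [Module R Cam2] [AddCommGroup Cam1] [Module R Cam1]
  [AddCommGroup Cak] [Module R Cak] [AddCommGroup Cap1] [Module R Cap1]
  [AddCommGroup Cbm2] [Module R Cbm2] [AddCommGroup Cbm1] [Module R Cbm1]
  [AddCommGroup Cbk] [Module R Cbk] [AddCommGroup Cbp1] [Module R Cbp1]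

theorem dbb_comp_mixedPropagator_eq_zero
    (daam1 : Cam1 →ₗ[R] Cam2) (daak : Cak →ₗ[R] Cam1) (daap1 : Cap1 →ₗ[R] Cak)
    (dbbm1 : Cbm1 →ₗ[R] Cbm2) (dbbk : Cbk →ₗ[R] Cbm1) (dbbp1 : Cbp1 →ₗ[R] Cbk)
    (dabm1 : Cam1 →ₗ[R] Cbm2) (dabk : Cak →ₗ[R] Cbm1) (dabp1 : Cap1 →ₗ[R] Cbk)
    (gaak : Cam1 →ₗ[R] Cak) (gaap1 : Cak →ₗ[R] Cap1)
    (gbbm1 : Cbm2 →ₗ[R] Cbm1) (gbbk : Cbm1 →ₗ[R] Cbk)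
    (gabm1 : Cam2 →ₗ[R] Cbm1) (gabk : Cam1 →ₗ[R] Cbk) (Gt : Cak →ₗ[R] Cbp1)
    (hdaa : daam1 ∘ₗ daak = 0) (hdbb : dbbk ∘ₗ dbbp1 = 0)
    (hdab1 : dabk ∘ₗ daap1 + dbbk ∘ₗ dabp1 = 0)
    (hdab2 : dabm1 ∘ₗ daak + dbbm1 ∘ₗ dabk = 0)
    (hgaa : daap1 ∘ₗ gaap1 + gaak ∘ₗ daak = LinearMap.id)
    (hgbb : dbbk ∘ₗ gbbk + gbbm1 ∘ₗ dbbm1 = LinearMap.id)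
    (hmix : dabk ∘ₗ gaak + dbbk ∘ₗ gabk + gabm1 ∘ₗ daam1 + gbbm1 ∘ₗ dabm1 = 0) :
    dbbk ∘ₗ (dabp1 ∘ₗ gaap1 + dbbp1 ∘ₗ Gt + gabk ∘ₗ daak + gbbk ∘ₗ dabk) = 0 := by
  have hdabp1_term : dbbk ∘ₗ dabp1 ∘ₗ gaap1 = -dabk + dabk ∘ₗ gaak ∘ₗ daak := by
    rw [← comp_assoc, eq_neg_of_add_eq_zero_right hdab1, neg_comp, comp_assoc,
      eq_sub_of_add_eq hgaa, comp_sub, comp_id]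
    abel
  have hGt_term : dbbk ∘ₗ dbbp1 ∘ₗ Gt = 0 := by
    rw [← comp_assoc, hdbb, zero_comp]
  have hgabk_term : dbbk ∘ₗ gabk ∘ₗ daak = -(dabk ∘ₗ gaak ∘ₗ daak) + gbbm1 ∘ₗ dbbm1 ∘ₗ dabk := by
    have hdbbgab : dbbk ∘ₗ gabk = -(dabk ∘ₗ gaak) - gabm1 ∘ₗ daam1 - gbbm1 ∘ₗ dabm1 := by
      rw [← sub_eq_zero, ← hmix]
      abel
    rw [← comp_assoc, hdbbgab, sub_comp, sub_comp, neg_comp, comp_assoc, comp_assoc, hdaa,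
      comp_zero, comp_assoc, eq_neg_of_add_eq_zero_left hdab2, comp_neg]
    abel
  have hgbbk_term : dbbk ∘ₗ gbbk ∘ₗ dabk = dabk - gbbm1 ∘ₗ dbbm1 ∘ₗ dabk := by
    rw [← comp_assoc, eq_sub_of_add_eq hgbb, sub_comp, id_comp, comp_assoc]
  rw [comp_add, comp_add, comp_add, hdabp1_term, hGt_term, hgabk_term, hgbbk_term]
  abel

end MixedPropagator

theorem stmt_5_general (F : Type*) [Field F]
    (Cam2 Cam1 Cak Cap1 Cbm2 Cbm1 Cbk Cbp1 : Type*)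
    [AddCommGroup Cam2] [Module F Cam2] [AddCommGroup Cam1] [Module F Cam1]
    [AddCommGroup Cak] [Module F Cak] [AddCommGroup Cap1] [Module F Cap1]
    [AddCommGroup Cbm2] [Module F Cbm2] [AddCommGroup Cbm1] [Module F Cbm1]
    [AddCommGroup Cbk] [Module F Cbk] [AddCommGroup Cbp1] [Module F Cbp1]
    (daam1 : Cam1 →ₗ[F] Cam2) (daak : Cak →ₗ[F] Cam1) (daap1 : Cap1 →ₗ[F] Cak)
    (dbbm1 : Cbm1 →ₗ[F] Cbm2) (dbbk : Cbk →ₗ[F] Cbm1) (dbbp1 : Cbp1 →ₗ[F] Cbk)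
    (dabm1 : Cam1 →ₗ[F] Cbm2) (dabk : Cak →ₗ[F] Cbm1) (dabp1 : Cap1 →ₗ[F] Cbk)
    (gaak : Cam1 →ₗ[F] Cak) (gaap1 : Cak →ₗ[F] Cap1)
    (gbbm1 : Cbm2 →ₗ[F] Cbm1) (gbbk : Cbm1 →ₗ[F] Cbk)
    (gabm1 : Cam2 →ₗ[F] Cbm1) (gabk : Cam1 →ₗ[F] Cbk)
    (Gt : Cak →ₗ[F] Cbp1)
    -- (i) chain complex relations
    (hdaa : daam1.comp daak = 0)
    (hdbb : dbbk.comp dbbp1 = 0)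
    -- (ii) mixed chain relations
    (hdab1 : dabk.comp daap1 + dbbk.comp dabp1 = 0)
    (hdab2 : dabm1.comp daak + dbbm1.comp dabk = 0)
    -- (iii) propagator relations
    (hgaa : daap1.comp gaap1 + gaak.comp daak = LinearMap.id)
    (hgbb : dbbk.comp gbbk + gbbm1.comp dbbm1 = LinearMap.id)
    -- (iv) degree-(k-1) mixed identity
    (hmix : dabk.comp gaak + dbbk.comp gabk + gabm1.comp daam1 + gbbm1.comp dabm1 = 0) :
    gbbk.comp (dbbk.comp
      (dabp1.comp gaap1 + dbbp1.comp Gt + gabk.comp daak + gbbk.comp dabk)) = 0 := by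
  rw [dbb_comp_mixedPropagator_eq_zero daam1 daak daap1 dbbm1 dbbk dbbp1 dabm1 dabk dabp1
    gaak gaap1 gbbm1 gbbk gabm1 gabk Gt hdaa hdbb hdab1 hdab2 hgaa hgbb hmix, comp_zero]

theorem stmt_5 (F : Type*) [Field F] (k : ℤ) (hk : 1 ≤ k)
    (Cam2 Cam1 Cak Cap1 Cbm2 Cbm1 Cbk Cbp1 : Type*)
    [AddCommGroup Cam2] [Module F Cam2] [AddCommGroup Cam1] [Module F Cam1]
    [AddCommGroup Cak] [Module F Cak] [AddCommGroup Cap1] [Module F Cap1]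
    [AddCommGroup Cbm2] [Module F Cbm2] [AddCommGroup Cbm1] [Module F Cbm1]
    [AddCommGroup Cbk] [Module F Cbk] [AddCommGroup Cbp1] [Module F Cbp1]
    (daam1 : Cam1 →ₗ[F] Cam2) (daak : Cak →ₗ[F] Cam1) (daap1 : Cap1 →ₗ[F] Cak)
    (dbbm1 : Cbm1 →ₗ[F] Cbm2) (dbbk : Cbk →ₗ[F] Cbm1) (dbbp1 : Cbp1 →ₗ[F] Cbk)
    (dabm1 : Cam1 →ₗ[F] Cbm2) (dabk : Cak →ₗ[F] Cbm1) (dabp1 : Cap1 →ₗ[F] Cbk)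
    (gaak : Cam1 →ₗ[F] Cak) (gaap1 : Cak →ₗ[F] Cap1)
    (gbbm1 : Cbm2 →ₗ[F] Cbm1) (gbbk : Cbm1 →ₗ[F] Cbk)
    (gabm1 : Cam2 →ₗ[F] Cbm1) (gabk : Cam1 →ₗ[F] Cbk)
    (Gt : Cak →ₗ[F] Cbp1)
    -- (i) chain complex relations
    (hdaa : daam1.comp daak = 0)
    (hdbb : dbbk.comp dbbp1 = 0)
    -- (ii) mixed chain relations
    (hdab1 : dabk.comp daap1 + dbbk.comp dabp1 = 0)
    (hdab2 : dabm1.comp daak + dbbm1.comp dabk = 0)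
    -- (iii) propagator relations
    (hgaa : daap1.comp gaap1 + gaak.comp daak = LinearMap.id)
    (hgbb : dbbk.comp gbbk + gbbm1.comp dbbm1 = LinearMap.id)
    -- (iv) degree-(k-1) mixed identity
    (hmix : dabk.comp gaak + dbbk.comp gabk + gabm1.comp daam1 + gbbm1.comp dabm1 = 0) :
    gbbk.comp (dbbk.comp
      (dabp1.comp gaap1 + dbbp1.comp Gt + gabk.comp daak + gbbk.comp dabk)) = 0 :=
  stmt_5_general F Cam2 Cam1 Cak Cap1 Cbm2 Cbm1 Cbk Cbp1 daam1 daak daap1 dbbm1 dbbk dbbp1 dabm1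
    dabk dabp1 gaak gaap1 gbbm1 gbbk gabm1 gabk Gt hdaa hdbb hdab1 hdab2 hgaa hgbb hmix
end

section
/- Let $F$ be a field and let $(C^a_k)_{k \in \mathbb{Z}}$, $(C^b_k)_{k \in \mathbb{Z}}$ be families of $F$-vector spaces vanishing in negative degrees, equipped with linear maps $\partial^{aa}_k : C^a_k \to C^a_{k-1}$, $\partial^{bb}_k : C^b_k \to C^b_{k-1}$, $\partial^{ab}_k : C^a_k \to C^b_{k-1}$ satisfying, for all $k$: $\partial^{aa}_k \circ \partial^{aa}_{k+1} = 0$, $\partial^{bb}_k \circ \partial^{bb}_{k+1} = 0$, and $\partial^{ab}_k \circ \partial^{aa}_{k+1} + \partial^{bb}_k \circ \partial^{ab}_{k+1} = 0$. Let $G^{aa}_*$ and $G^{bb}_*$ be combinatorial propagators for $(C^a_*, \partial^{aa}_*)$ and $(C^b_*, \partial^{bb}_*)$. Fix $k \ge 0$ and suppose the maps $G^{ab}_{k-1} : C^a_{k-2} \to C^b_{k-1}$ and $G^{ab}_k : C^a_{k-1} \to C^b_k$ satisfy the degree-$(k-1)$ mixed identity $\partial^{ab}_k \circ G^{aa}_k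 + \partial^{bb}_k \circ G^{ab}_k + G^{ab}_{k-1} \circ \partial^{aa}_{k-1} + G^{bb}_{k-1} \circ \partial^{ab}_{k-1} = 0$. Then $G^{ab}_{k+1} := -\big( G^{bb}_{k+1} \circ \partial^{ab}_{k+1} \circ G^{aa}_{k+1} + G^{bb}_{k+1} \circ G^{ab}_k \circ \partial^{aa}_k + G^{bb}_{k+1} \circ G^{bb}_k \circ \partial^{ab}_k \big)$ satisfies the degree-$k$ mixed identity $\partial^{ab}_{k+1} \circ G^{aa}_{k+1} + \partial^{bb}_{k+1} \circ G^{ab}_{k+1} + G^{ab}_k \circ \partial^{aa}_k + G^{bb}_k \circ \partial^{ab}_k = 0$. -/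
/-!
Write `S = ∂ab_{k+1} G^aa_{k+1} + G^ab_k ∂aa_k + G^bb_k ∂ab_k`, so that the degree-`k` identity
reads `S + ∂bb_{k+1} G^ab_{k+1} = 0` and the recursion is `G^ab_{k+1} = -G^bb_{k+1} S`.
Using the degree-`(k-1)` identity, the propagator identities and `∂∂ = 0`, one computes
`∂bb_k S = -G^bb_{k-1} (∂ab_{k-1} ∂aa_k + ∂bb_{k-1} ∂ab_k) = 0`. Since
`∂bb_{k+1} G^bb_{k+1} + G^bb_k ∂bb_k = id`, this gives `∂bb_{k+1} G^bb_{k+1} S = S`.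
-/

open LinearMap

theorem LinearMap.comp_comp_eq_self_of_add_eq_id {R M N N' P : Type*} [Semiring R]
    [AddCommMonoid M] [AddCommMonoid N] [AddCommMonoid N'] [AddCommMonoid P]
    [Module R M] [Module R N] [Module R N'] [Module R P]
    {d' : N' →ₗ[R] N} {g' : N →ₗ[R] N'} {g : P →ₗ[R] N} {d : N →ₗ[R] P}
    (h : d'.comp g' + g.comp d = LinearMap.id) {S : M →ₗ[R] N} (hS : d.comp S = 0) :
    d'.comp (g'.comp S) = S := by
  calc d'.comp (g'.comp S) = (d'.comp g' + g.comp d).comp S := by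
        rw [add_comp, comp_assoc, comp_assoc, hS, comp_zero, add_zero]
    _ = S := by rw [h, id_comp]

namespace MixedPropagator

variable {R : Type*} [Semiring R] {Ca Cb : ℤ → Type*}
  [∀ i, AddCommGroup (Ca i)] [∀ i, Module R (Ca i)]
  [∀ i, AddCommGroup (Cb i)] [∀ i, Module R (Cb i)]
  (daa : ∀ i : ℤ, Ca (i + 1) →ₗ[R] Ca i) (dbb : ∀ i : ℤ, Cb (i + 1) →ₗ[R] Cb i)
  (dab : ∀ i : ℤ, Ca (i + 1) →ₗ[R] Cb i)
  (gaa : ∀ i : ℤ, Ca i →ₗ[R] Ca (i + 1)) (gbb : ∀ i : ℤ, Cb i →ₗ[R] Cb (i + 1))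

/- `d i` and `g i` are the paper's `∂_{i+1}` and `G_{i+1}`, `gab₀ = G^ab_{i+1}`, `gab₁ = G^ab_{i+2}`;
`defect i` is the left side of the degree-`(i+1)` mixed identity. -/
def source (i : ℤ) (gab₀ : Ca i →ₗ[R] Cb (i + 1)) : Ca (i + 1) →ₗ[R] Cb (i + 1) :=
  (dab (i + 1)).comp (gaa (i + 1)) + gab₀.comp (daa i) + (gbb i).comp (dab i)

def defect (i : ℤ) (gab₀ : Ca i →ₗ[R] Cb (i + 1)) (gab₁ : Ca (i + 1) →ₗ[R] Cb (i + 1 + 1)) :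
    Ca (i + 1) →ₗ[R] Cb (i + 1) :=
  (dab (i + 1)).comp (gaa (i + 1)) + (dbb (i + 1)).comp gab₁ + gab₀.comp (daa i)
    + (gbb i).comp (dab i)

variable {daa dbb dab gaa gbb}

theorem defect_eq_source_add (i : ℤ) (gab₀ : Ca i →ₗ[R] Cb (i + 1))
    (gab₁ : Ca (i + 1) →ₗ[R] Cb (i + 1 + 1)) :
    defect daa dbb dab gaa gbb i gab₀ gab₁ =
      source daa dab gaa gbb i gab₀ + (dbb (i + 1)).comp gab₁ := by
  unfold defect source
  abel

theorem dbb_comp_source_eq_zero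
    (hdaa : ∀ i : ℤ, (daa i).comp (daa (i + 1)) = 0)
    (hdab : ∀ i : ℤ, (dab i).comp (daa (i + 1)) + (dbb i).comp (dab (i + 1)) = 0)
    (hgaa : ∀ i : ℤ, (daa (i + 1)).comp (gaa (i + 1)) + (gaa i).comp (daa i) = LinearMap.id)
    (hgbb : ∀ i : ℤ, (dbb (i + 1)).comp (gbb (i + 1)) + (gbb i).comp (dbb i) = LinearMap.id)
    {i : ℤ} {gab₀ : Ca i →ₗ[R] Cb (i + 1)}
    {gab₁ : Ca (i + 1) →ₗ[R] Cb (i + 1 + 1)} (hmix : defect daa dbb dab gaa gbb i gab₀ gab₁ = 0) :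
    (dbb (i + 1)).comp (source daa dab gaa gbb (i + 1) gab₁) = 0 := by
  have h_dab : (dbb (i + 1)).comp (dab (i + 1 + 1)) = -(dab (i + 1)).comp (daa (i + 1 + 1)) :=
    eq_neg_of_add_eq_zero_right (hdab (i + 1))
  have h_gab : (dbb (i + 1)).comp gab₁ = -source daa dab gaa gbb i gab₀ := by
    rw [defect_eq_source_add] at hmix
    exact eq_neg_of_add_eq_zero_right hmix
  have h_gaa := eq_sub_of_add_eq (hgaa (i + 1))
  have h_gbb := eq_sub_of_add_eq (hgbb i)
  calc (dbb (i + 1)).comp (source daa dab gaa gbb (i + 1) gab₁)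
      = ((dbb (i + 1)).comp (dab (i + 1 + 1))).comp (gaa (i + 1 + 1))
          + ((dbb (i + 1)).comp gab₁).comp (daa (i + 1))
          + ((dbb (i + 1)).comp (gbb (i + 1))).comp (dab (i + 1)) := by
        simp only [source, comp_add, comp_assoc]
    _ = -(gbb i).comp ((dab i).comp (daa (i + 1)) + (dbb i).comp (dab (i + 1))) := by
        rw [h_dab, h_gab, h_gbb, neg_comp, comp_assoc, h_gaa]
        simp only [source, comp_add, comp_sub, add_comp, sub_comp, neg_comp, comp_assoc,
          hdaa i, comp_zero, comp_id, id_comp]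
        abel
    _ = 0 := by rw [hdab i, comp_zero, neg_zero]

theorem defect_succ_eq_zero
    (hdaa : ∀ i : ℤ, (daa i).comp (daa (i + 1)) = 0)
    (hdab : ∀ i : ℤ, (dab i).comp (daa (i + 1)) + (dbb i).comp (dab (i + 1)) = 0)
    (hgaa : ∀ i : ℤ, (daa (i + 1)).comp (gaa (i + 1)) + (gaa i).comp (daa i) = LinearMap.id)
    (hgbb : ∀ i : ℤ, (dbb (i + 1)).comp (gbb (i + 1)) + (gbb i).comp (dbb i) = LinearMap.id)
    {i : ℤ} {gab₀ : Ca i →ₗ[R] Cb (i + 1)}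
    {gab₁ : Ca (i + 1) →ₗ[R] Cb (i + 1 + 1)} (hmix : defect daa dbb dab gaa gbb i gab₀ gab₁ = 0) :
    defect daa dbb dab gaa gbb (i + 1) gab₁
      (-(gbb (i + 1 + 1)).comp (source daa dab gaa gbb (i + 1) gab₁)) = 0 := by
  rw [defect_eq_source_add, comp_neg,
    comp_comp_eq_self_of_add_eq_id (hgbb (i + 1))
      (dbb_comp_source_eq_zero hdaa hdab hgaa hgbb hmix), add_neg_cancel]

end MixedPropagator

theorem stmt_6_general (F : Type*) [Field F]
    (Ca Cb : ℤ → Type*)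
    [∀ i, AddCommGroup (Ca i)] [∀ i, Module F (Ca i)]
    [∀ i, AddCommGroup (Cb i)] [∀ i, Module F (Cb i)]
    (daa : ∀ i : ℤ, Ca (i + 1) →ₗ[F] Ca i)
    (dbb : ∀ i : ℤ, Cb (i + 1) →ₗ[F] Cb i)
    (dab : ∀ i : ℤ, Ca (i + 1) →ₗ[F] Cb i)
    (hdaa : ∀ i : ℤ, (daa i).comp (daa (i + 1)) = 0)
    (hdab : ∀ i : ℤ, (dab i).comp (daa (i + 1)) + (dbb i).comp (dab (i + 1)) = 0)
    (gaa : ∀ i : ℤ, Ca i →ₗ[F] Ca (i + 1))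
    (gbb : ∀ i : ℤ, Cb i →ₗ[F] Cb (i + 1))
    (hgaa : ∀ i : ℤ,
      (daa (i + 1)).comp (gaa (i + 1)) + (gaa i).comp (daa i) = LinearMap.id)
    (hgbb : ∀ i : ℤ,
      (dbb (i + 1)).comp (gbb (i + 1)) + (gbb i).comp (dbb i) = LinearMap.id)
    (j : ℤ)
    (gab1 : Ca j →ₗ[F] Cb (j + 1))
    (gab2 : Ca (j + 1) →ₗ[F] Cb (j + 1 + 1))
    (hmix : (dab (j + 1)).comp (gaa (j + 1)) + (dbb (j + 1)).comp gab2
        + gab1.comp (daa j) + (gbb j).comp (dab j) = 0)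
    (gab3 : Ca (j + 1 + 1) →ₗ[F] Cb (j + 1 + 1 + 1))
    (hgab3 : gab3 =
      -((gbb (j + 1 + 1)).comp ((dab (j + 1 + 1)).comp (gaa (j + 1 + 1)))
        + (gbb (j + 1 + 1)).comp (gab2.comp (daa (j + 1)))
        + (gbb (j + 1 + 1)).comp ((gbb (j + 1)).comp (dab (j + 1))))) :
    (dab (j + 1 + 1)).comp (gaa (j + 1 + 1)) + (dbb (j + 1 + 1)).comp gab3
      + gab2.comp (daa (j + 1)) + (gbb (j + 1)).comp (dab (j + 1)) = 0 := by
  rw [hgab3, ← comp_add, ← comp_add]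
  exact MixedPropagator.defect_succ_eq_zero (gab₀ := gab1) hdaa hdab hgaa hgbb hmix

theorem stmt_6 (F : Type*) [Field F]
    (Ca Cb : ℤ → Type*)
    [∀ i, AddCommGroup (Ca i)] [∀ i, Module F (Ca i)]
    [∀ i, AddCommGroup (Cb i)] [∀ i, Module F (Cb i)]
    (hCa : ∀ i : ℤ, i < 0 → Subsingleton (Ca i))
    (hCb : ∀ i : ℤ, i < 0 → Subsingleton (Cb i))
    (daa : ∀ i : ℤ, Ca (i + 1) →ₗ[F] Ca i)
    (dbb : ∀ i : ℤ, Cb (i + 1) →ₗ[F] Cb i)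
    (dab : ∀ i : ℤ, Ca (i + 1) →ₗ[F] Cb i)
    (hdaa : ∀ i : ℤ, (daa i).comp (daa (i + 1)) = 0)
    (hdbb : ∀ i : ℤ, (dbb i).comp (dbb (i + 1)) = 0)
    (hdab : ∀ i : ℤ, (dab i).comp (daa (i + 1)) + (dbb i).comp (dab (i + 1)) = 0)
    (gaa : ∀ i : ℤ, Ca i →ₗ[F] Ca (i + 1))
    (gbb : ∀ i : ℤ, Cb i →ₗ[F] Cb (i + 1))
    (hgaa : ∀ i : ℤ,
      (daa (i + 1)).comp (gaa (i + 1)) + (gaa i).comp (daa i) = LinearMap.id)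
    (hgbb : ∀ i : ℤ,
      (dbb (i + 1)).comp (gbb (i + 1)) + (gbb i).comp (dbb i) = LinearMap.id)
    (k j : ℤ) (hk : 0 ≤ k) (hjk : k = j + 2)
    (gab1 : Ca j →ₗ[F] Cb (j + 1))
    (gab2 : Ca (j + 1) →ₗ[F] Cb (j + 1 + 1))
    (hmix : (dab (j + 1)).comp (gaa (j + 1)) + (dbb (j + 1)).comp gab2
        + gab1.comp (daa j) + (gbb j).comp (dab j) = 0)
    (gab3 : Ca (j + 1 + 1) →ₗ[F] Cb (j + 1 + 1 + 1))
    (hgab3 : gab3 =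
      -((gbb (j + 1 + 1)).comp ((dab (j + 1 + 1)).comp (gaa (j + 1 + 1)))
        + (gbb (j + 1 + 1)).comp (gab2.comp (daa (j + 1)))
        + (gbb (j + 1 + 1)).comp ((gbb (j + 1)).comp (dab (j + 1))))) :
    (dab (j + 1 + 1)).comp (gaa (j + 1 + 1)) + (dbb (j + 1 + 1)).comp gab3
      + gab2.comp (daa (j + 1)) + (gbb (j + 1)).comp (dab (j + 1)) = 0 :=
  stmt_6_general F Ca Cb daa dbb dab hdaa hdab gaa gbb hgaa hgbb j gab1 gab2 hmix gab3 hgab3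
end

section
/- Let $F$ be a field, $V$ an $F$-vector space, and $a : V \to V$ an invertible linear map such that $\mathrm{id} - a$ is invertible (hence $\mathrm{id} - a^{-1}$ is invertible). Let $c : V \to V$ be an arbitrary linear map. Consider the sequence of vector spaces $C_3 = V$, $C_2 = V \oplus V$, $C_1 = V$ (and $C_k = 0$ otherwise) with linear maps $\partial_3 : C_3 \to C_2$, $\partial_3(x) = ((\mathrm{id}-a)x,\ c\,x)$, and $\partial_2 : C_2 \to C_1$, $\partial_2(x,y) = -(\mathrm{id}-a^{-1})\,c\,(\mathrm{id}-a)^{-1} x + (\mathrm{id}-a^{-1})\,y$. Then: (1) $\partial_2 \circ \partial_3 = 0$, so this is a chain complex; and (2) the maps $G_3 : C_2 \to C_3$, $G_3(x,y) = (\mathrm{id}-a)^{-1} x$, $G_2 : C_1 \to C_2$, $G_2(z) = (0,\ (\mathrm{id}-a^{-1})^{-1} z)$, and $G_k = 0$ for all other $k$, form a combinatorial propagator for this complex, i.e. $\partial_{k+1} \circ G_{k+1} + G_k \circ \partial_k = \mathrm{id}_{C_k}$ for all $k$. -/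
/-! Evaluated componentwise, every identity reduces to cancelling `1 - a` or `1 - a⁻¹` against
its inverse; the second is invertible because `1 - a⁻¹ = a⁻¹ (a - 1)`. -/

theorem Ring.isUnit_one_sub_inverse {R : Type*} [Ring R] {a : R} (ha : IsUnit a)
    (h1a : IsUnit (1 - a)) : IsUnit (1 - Ring.inverse a) := by
  have hfactor : 1 - Ring.inverse a = Ring.inverse a * -(1 - a) := by
    rw [mul_neg, mul_sub, mul_one, Ring.inverse_mul_cancel _ ha, neg_sub]
  rw [hfactor]
  exact (isUnit_ringInverse.mpr ha).mul h1a.neg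

namespace Module.End

variable {R M : Type*} [Semiring R] [AddCommMonoid M] [Module R M] {f : Module.End R M}

theorem ringInverse_apply_apply (hf : IsUnit f) (x : M) : Ring.inverse f (f x) = x := by
  rw [← mul_apply, Ring.inverse_mul_cancel _ hf, one_apply]

theorem apply_ringInverse_apply (hf : IsUnit f) (x : M) : f (Ring.inverse f x) = x := by
  rw [← mul_apply, Ring.mul_inverse_cancel _ hf, one_apply]

end Module.End

open Module.End in
theorem stmt_8 (F V : Type*) [Field F] [AddCommGroup V] [Module F V]
    (a : Module.End F V) (ha : IsUnit a) (h1a : IsUnit (1 - a))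
    (c : Module.End F V)
    (d3 : V →ₗ[F] V × V)
    (hd3 : ∀ x : V, d3 x = ((1 - a) x, c x))
    (d2 : V × V →ₗ[F] V)
    (hd2 : ∀ p : V × V,
      d2 p = -((1 - Ring.inverse a) (c (Ring.inverse (1 - a) p.1)))
        + (1 - Ring.inverse a) p.2)
    (G3 : V × V →ₗ[F] V)
    (hG3 : ∀ p : V × V, G3 p = Ring.inverse (1 - a) p.1)
    (G2 : V →ₗ[F] V × V)
    (hG2 : ∀ z : V, G2 z = (0, Ring.inverse (1 - Ring.inverse a) z)) :
    d2.comp d3 = 0 ∧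
    G3.comp d3 = LinearMap.id ∧
    d3.comp G3 + G2.comp d2 = LinearMap.id ∧
    d2.comp G2 = LinearMap.id := by
  have h1ainv := Ring.isUnit_one_sub_inverse ha h1a
  refine ⟨LinearMap.ext fun x => ?_, LinearMap.ext fun x => ?_, LinearMap.ext fun p => ?_,
    LinearMap.ext fun z => ?_⟩
  · simp only [LinearMap.comp_apply, LinearMap.zero_apply, hd3, hd2,
      ringInverse_apply_apply h1a, neg_add_cancel]
  · simp only [LinearMap.comp_apply, LinearMap.id_apply, hd3, hG3, ringInverse_apply_apply h1a]
  · simp only [LinearMap.add_apply, LinearMap.comp_apply, LinearMap.id_apply, hd3, hd2, hG3, hG2,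
      map_add, map_neg, apply_ringInverse_apply h1a, ringInverse_apply_apply h1ainv,
      Prod.mk_add_mk, add_zero, add_neg_cancel_left]
  · simp only [LinearMap.comp_apply, LinearMap.id_apply, hG2, hd2, map_zero, neg_zero, zero_add,
      apply_ringInverse_apply h1ainv]
end
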